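/- arXiv:1301.5760 — 2 statements merged into one kernel-verified Lean document; each statement's English description precedes it below -/
import Mathlib

section
/- For every n ≥ 0 and all subsets I, J ⊆ [n], the entry A_n(I, J) equals (−1)^{|I ∩ J|} if I ≫ J, and equals 0 otherwise. -/
open Finset Polynomial
open scoped Classical

namespace AR

/-- `binVal I = r_n(I) - 1 = Σ_{i ∈ I} 2^(i-1)`. -/
def binVal (I : Finset ℕ) : ℕ := ∑ i ∈ I, 2 ^ (i - 1)

lemma binVal_Icc (m : ℕ) : binVal (Finset.Icc 1 m) = 2 ^ m - 1 := by
  induction m with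
  | zero => simp [binVal]
  | succ k ih =>
      rw [binVal, Finset.sum_Icc_succ_top (by omega)]
      rw [binVal] at ih
      rw [ih]
      have h1 : 1 ≤ 2 ^ k := Nat.one_le_two_pow
      simp only [Nat.add_sub_cancel, pow_succ]
      omega

lemma binVal_lt {n : ℕ} {I : Finset ℕ} (h : I ⊆ Finset.Icc 1 n) : binVal I < 2 ^ n := by
  have h1 : binVal I ≤ binVal (Finset.Icc 1 n) :=
    Finset.sum_le_sum_of_subset h
  have h2 := binVal_Icc n
  have h3 : 1 ≤ 2 ^ n := Nat.one_le_two_pow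
  omega

/-- The row/column index (zero-based, i.e. `r_n(I) - 1`) corresponding to a subset `I ⊆ [n]`. -/
def idx (n : ℕ) (I : Finset ℕ) (h : I ⊆ Finset.Icc 1 n) : Fin (2 ^ n) :=
  ⟨binVal I, binVal_lt h⟩

def blockEquiv (n : ℕ) : Fin (2 ^ n) ⊕ Fin (2 ^ n) ≃ Fin (2 ^ (n + 1)) :=
  finSumFinEquiv.trans (finCongr (by rw [pow_succ, mul_two]))

/-- The pair of Adin–Roichman matrices `(A_n, B_n)`, defined recursively. -/
def ABpair : (n : ℕ) → Matrix (Fin (2 ^ n)) (Fin (2 ^ n)) ℤ × Matrix (Fin (2 ^ n)) (Fin (2 ^ n)) ℤ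
  | 0 => (Matrix.of fun _ _ => 1, Matrix.of fun _ _ => 1)
  | n + 1 =>
      let p := ABpair n
      ((Matrix.reindex (blockEquiv n) (blockEquiv n)) (Matrix.fromBlocks p.1 p.1 p.1 (-p.2)),
       (Matrix.reindex (blockEquiv n) (blockEquiv n)) (Matrix.fromBlocks p.1 p.1 0 (-p.2)))

def A (n : ℕ) : Matrix (Fin (2 ^ n)) (Fin (2 ^ n)) ℤ := (ABpair n).1

def B (n : ℕ) : Matrix (Fin (2 ^ n)) (Fin (2 ^ n)) ℤ := (ABpair n).2

/-- `R` is a (nonempty) integer interval. -/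
def IsInterval (R : Finset ℕ) : Prop := ∃ a b : ℕ, R = Finset.Icc a b

/-- `R` is a run of `I`: a maximal nonempty interval contained in `I`. -/
def IsRun (I R : Finset ℕ) : Prop :=
  R.Nonempty ∧ IsInterval R ∧ R ⊆ I ∧
    ∀ S : Finset ℕ, IsInterval S → S ⊆ I → R ⊆ S → S = R

/-- `R` is a prefix of `S` : `min R = min S` and `R ⊆ S`. -/
def IsPrefixOf (R S : Finset ℕ) : Prop := R.min = S.min ∧ R ⊆ S

/-- `I ≫ J` : every run of `I ∩ J` is a prefix of a run of `I`. -/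
def Gg (I J : Finset ℕ) : Prop :=
  ∀ R : Finset ℕ, IsRun (I ∩ J) R → ∃ S : Finset ℕ, IsRun I S ∧ IsPrefixOf R S

/-- The set of runs of `I`. -/
noncomputable def runs (I : Finset ℕ) : Finset (Finset ℕ) :=
  I.powerset.filter (fun R => IsRun I R)

/-- `π(I)`: the product of (size + 1) over the runs of `I`. -/
noncomputable def piFun (I : Finset ℕ) : ℕ := ∏ R ∈ runs I, (R.card + 1)

/-- `π'_n(I)`: the product of (size + 1) over the runs of `I` not containing `n`. -/
noncomputable def piFun' (n : ℕ) (I : Finset ℕ) : ℕ :=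
  ∏ R ∈ (runs I).filter (fun R => n ∉ R), (R.card + 1)

/-- The subset of `[n]` encoded by a zero-based index `i : Fin (2^n)` (binary digits). -/
def decode (n : ℕ) (i : Fin (2 ^ n)) : Finset ℕ :=
  (Finset.Icc 1 n).filter (fun k => Nat.testBit i.val (k - 1))

/-- The matrix `U_n`, with `U_n(I,J) = 1` if `I ⊇ J` and `0` otherwise. -/
def U (n : ℕ) : Matrix (Fin (2 ^ n)) (Fin (2 ^ n)) ℤ :=
  Matrix.of fun i j => if decode n j ⊆ decode n i then 1 else 0

/-- The matrix `V_n = U_n⁻¹`, with `V_n(I,J) = (-1)^{|I \ J|}` if `I ⊇ J` and `0` otherwise. -/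
def V (n : ℕ) : Matrix (Fin (2 ^ n)) (Fin (2 ^ n)) ℤ :=
  Matrix.of fun i j =>
    if decode n j ⊆ decode n i then (-1) ^ ((decode n i) \ (decode n j)).card else 0

def A' (n : ℕ) : Matrix (Fin (2 ^ n)) (Fin (2 ^ n)) ℤ := U n * A n * V n

def B' (n : ℕ) : Matrix (Fin (2 ^ n)) (Fin (2 ^ n)) ℤ := U n * B n * V n

/-- `E ⪯ I` : `E ⊆ I`, `E` contains no minimal element of a run of `I`,
and `E` contains no two consecutive integers. -/
def SubPrec (E I : Finset ℕ) : Prop :=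
  E ⊆ I ∧ (∀ R : Finset ℕ, (h : IsRun I R) → R.min' h.1 ∉ E) ∧
    ∀ i : ℕ, ¬ (i ∈ E ∧ i + 1 ∈ E)

/-- `I ⇝ J` : `J = ([n] \ I) ∪ E` for some `E ⪯ I`. -/
def Step (n : ℕ) (I J : Finset ℕ) : Prop :=
  ∃ E : Finset ℕ, SubPrec E I ∧ J = (Finset.Icc 1 n \ I) ∪ E

/-- `π_μ` for a composition `μ` of `n`. -/
def piComp {n : ℕ} (μ : Composition n) : ℕ := (μ.blocks.map (· + 1)).prod

/-- `π'_μ` for a composition `μ` of `n`. -/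
def piComp' {n : ℕ} (μ : Composition n) : ℕ := (μ.blocks.dropLast.map (· + 1)).prod

/-- The Thue–Morse sequence: `thueMorse m = s₂(m) % 2`. -/
def thueMorse (m : ℕ) : ℕ := (Nat.digits 2 m).sum % 2


section AuxProof

/-- Elementwise characterization of `Gg`. -/
def P (I J : Finset ℕ) : Prop := ∀ a, a ∈ I → a ∈ J → a - 1 ∈ I → a - 1 ∈ J

lemma min_Icc {a b : ℕ} (h : a ≤ b) : (Finset.Icc a b).min = (a : WithTop ℕ) := by
  refine le_antisymm (Finset.min_le (Finset.mem_Icc.mpr ⟨le_refl a, h⟩)) (Finset.le_min fun x hx => ?_)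
  exact WithTop.coe_le_coe.mpr (Finset.mem_Icc.mp hx).1

lemma interval_eq {R : Finset ℕ} (h1 : R.Nonempty) (h2 : IsInterval R) :
    ∃ a b, a ≤ b ∧ R = Finset.Icc a b := by
  obtain ⟨a, b, rfl⟩ := h2
  exact ⟨a, b, by simpa using h1, rfl⟩

lemma exists_run {K : Finset ℕ} {a : ℕ} (ha : a ∈ K) (ha' : a - 1 ∉ K ∨ a = 0) :
    ∃ b, a ≤ b ∧ IsRun K (Finset.Icc a b) := by
  set T := (Finset.Icc a (K.sup id)).filter (fun c => Finset.Icc a c ⊆ K) with hT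
  have haT : a ∈ T := by
    refine Finset.mem_filter.mpr ⟨Finset.mem_Icc.mpr ⟨le_refl a, Finset.le_sup (f := id) ha⟩, ?_⟩
    intro x hx
    have := Finset.mem_Icc.mp hx
    have hxa : x = a := by omega
    rwa [hxa]
  set b := T.max' ⟨a, haT⟩ with hb
  have hbT : b ∈ T := T.max'_mem _
  have hab : a ≤ b := (Finset.mem_Icc.mp (Finset.mem_filter.mp hbT).1).1
  have hIcc : Finset.Icc a b ⊆ K := (Finset.mem_filter.mp hbT).2
  refine ⟨b, hab, Finset.nonempty_Icc.mpr hab, ⟨a, b, rfl⟩, hIcc, ?_⟩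
  rintro S ⟨p, q, rfl⟩ hSK hsub
  have hpa : p ≤ a ∧ a ≤ q := Finset.mem_Icc.mp (hsub (Finset.mem_Icc.mpr ⟨le_refl a, hab⟩))
  have hbq : b ≤ q := (Finset.mem_Icc.mp (hsub (Finset.mem_Icc.mpr ⟨hab, le_refl b⟩))).2
  have hpa' : p = a := by
    by_contra hne
    have hplt : p < a := lt_of_le_of_ne hpa.1 hne
    have ha0 : a ≠ 0 := by omega
    have : a - 1 ∈ Finset.Icc p q := Finset.mem_Icc.mpr ⟨by omega, by omega⟩
    have : a - 1 ∈ K := hSK this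
    rcases ha' with h | h
    · exact absurd this h
    · exact ha0 h
  subst hpa'
  have hqK : q ∈ K := hSK (Finset.mem_Icc.mpr ⟨by omega, le_refl q⟩)
  have hqT : q ∈ T := by
    refine Finset.mem_filter.mpr ⟨Finset.mem_Icc.mpr ⟨by omega, Finset.le_sup (f := id) hqK⟩, hSK⟩
  have h1 : q ≤ b := T.le_max' q hqT
  have h2 : q = b := le_antisymm h1 hbq
  rw [h2]

lemma gg_iff {I J : Finset ℕ} : Gg I J ↔ P I J := by
  constructor
  · intro h a haI haJ haI1
    by_contra haJ1
    have ha0 : a ≠ 0 := by rintro rfl; exact haJ1 haJ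
    have h1 : a - 1 ∉ I ∩ J := fun hx => haJ1 (Finset.mem_inter.mp hx).2
    obtain ⟨b, hab, hrun⟩ := exists_run (Finset.mem_inter.mpr ⟨haI, haJ⟩) (Or.inl h1)
    obtain ⟨S, hS, hpre⟩ := h _ hrun
    obtain ⟨p, q, hpq, rfl⟩ := interval_eq hS.1 hS.2.1
    have hap : a = p := by
      have := hpre.1
      rw [min_Icc hab, min_Icc hpq] at this
      exact_mod_cast this
    subst hap
    have hTI : Finset.Icc (a - 1) q ⊆ I := by
      intro x hx
      have hx' := Finset.mem_Icc.mp hx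
      rcases eq_or_lt_of_le hx'.1 with h' | h'
      · rwa [← h']
      · exact hS.2.2.1 (Finset.mem_Icc.mpr ⟨by omega, hx'.2⟩)
    have heq := hS.2.2.2 (Finset.Icc (a - 1) q) ⟨a - 1, q, rfl⟩ hTI
      (Finset.Icc_subset_Icc (by omega) (le_refl q))
    have hmm : a - 1 ∈ Finset.Icc a q := by
      rw [← heq]; exact Finset.mem_Icc.mpr ⟨le_refl _, by omega⟩
    have := Finset.mem_Icc.mp hmm
    omega
  · intro h R hR
    obtain ⟨aR, bR, hab, rfl⟩ := interval_eq hR.1 hR.2.1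
    have hsub : Finset.Icc aR bR ⊆ I ∩ J := hR.2.2.1
    have haIJ : aR ∈ I ∩ J := hsub (Finset.mem_Icc.mpr ⟨le_refl _, hab⟩)
    have haI : aR ∈ I := (Finset.mem_inter.mp haIJ).1
    have haJ : aR ∈ J := (Finset.mem_inter.mp haIJ).2
    have h1 : aR - 1 ∉ I ∨ aR = 0 := by
      by_cases h0 : aR = 0
      · exact Or.inr h0
      · left
        intro haI1
        have hnotIJ : aR - 1 ∉ I ∩ J := by
          intro hmem
          have hTsub : Finset.Icc (aR - 1) bR ⊆ I ∩ J := by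
            intro x hx
            have hx' := Finset.mem_Icc.mp hx
            rcases eq_or_lt_of_le hx'.1 with h' | h'
            · rwa [← h']
            · exact hsub (Finset.mem_Icc.mpr ⟨by omega, hx'.2⟩)
          have heq := hR.2.2.2 (Finset.Icc (aR - 1) bR) ⟨aR - 1, bR, rfl⟩ hTsub
            (Finset.Icc_subset_Icc (by omega) (le_refl _))
          have hmm : aR - 1 ∈ Finset.Icc aR bR := by
            rw [← heq]; exact Finset.mem_Icc.mpr ⟨le_refl _, by omega⟩
          have := Finset.mem_Icc.mp hmm
          omega
        exact hnotIJ (Finset.mem_inter.mpr ⟨haI1, h aR haI haJ haI1⟩)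
    obtain ⟨b', hab', hrun'⟩ := exists_run haI h1
    refine ⟨Finset.Icc aR b', hrun', ?_, ?_⟩
    · rw [min_Icc hab, min_Icc hab']
    · have hTI : Finset.Icc aR (max bR b') ⊆ I := by
        intro x hx
        have hx' := Finset.mem_Icc.mp hx
        by_cases hxb : x ≤ bR
        · exact (Finset.mem_inter.mp (hsub (Finset.mem_Icc.mpr ⟨hx'.1, hxb⟩))).1
        · exact hrun'.2.2.1 (Finset.mem_Icc.mpr ⟨hx'.1, by omega⟩)
      have heq := hrun'.2.2.2 (Finset.Icc aR (max bR b')) ⟨aR, max bR b', rfl⟩ hTI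
        (Finset.Icc_subset_Icc (le_refl _) (le_max_right _ _))
      have hmm : max bR b' ∈ Finset.Icc aR b' := by
        rw [← heq]; exact Finset.mem_Icc.mpr ⟨by omega, le_refl _⟩
      have := (Finset.mem_Icc.mp hmm).2
      exact Finset.Icc_subset_Icc (le_refl _) (by omega)

lemma gg_erase_right {n : ℕ} {I J : Finset ℕ} (hI : I ⊆ Finset.Icc 1 n) :
    Gg I J ↔ Gg I (J.erase (n + 1)) := by
  rw [gg_iff, gg_iff]
  constructor
  · intro h a haI haJ' ha1
    have han : a ≤ n := (Finset.mem_Icc.mp (hI haI)).2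
    exact Finset.mem_erase.mpr ⟨by omega, h a haI (Finset.mem_of_mem_erase haJ') ha1⟩
  · intro h a haI haJ ha1
    have han : a ≤ n := (Finset.mem_Icc.mp (hI haI)).2
    exact Finset.mem_of_mem_erase (h a haI (Finset.mem_erase.mpr ⟨by omega, haJ⟩) ha1)

lemma gg_erase_left {n : ℕ} {I J : Finset ℕ} (hI : I ⊆ Finset.Icc 1 (n + 1))
    (hJn : n + 1 ∉ J) : Gg I J ↔ Gg (I.erase (n + 1)) J := by
  rw [gg_iff, gg_iff]
  constructor
  · intro h a haI' haJ ha1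
    exact h a (Finset.mem_of_mem_erase haI') haJ (Finset.mem_of_mem_erase ha1)
  · intro h a haI haJ ha1
    have hne : a ≠ n + 1 := fun hx => hJn (hx ▸ haJ)
    have han : a ≤ n + 1 := (Finset.mem_Icc.mp (hI haI)).2
    exact h a (Finset.mem_erase.mpr ⟨hne, haI⟩) haJ (Finset.mem_erase.mpr ⟨by omega, ha1⟩)

lemma gg_both {n : ℕ} {I J : Finset ℕ} (hI : I ⊆ Finset.Icc 1 (n + 1))
    (hJ : J ⊆ Finset.Icc 1 (n + 1)) (hmI : n + 1 ∈ I) (hmJ : n + 1 ∈ J) :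
    Gg I J ↔ (Gg (I.erase (n + 1)) (J.erase (n + 1)) ∧
      (n ∈ I.erase (n + 1) → n ∈ J.erase (n + 1))) := by
  rw [gg_iff, gg_iff]
  constructor
  · intro h
    constructor
    · intro a haI' haJ' ha1
      have haI := Finset.mem_of_mem_erase haI'
      have hane : a ≠ n + 1 := (Finset.mem_erase.mp haI').1
      have han : a ≤ n + 1 := (Finset.mem_Icc.mp (hI haI)).2
      exact Finset.mem_erase.mpr ⟨by omega, h a haI (Finset.mem_of_mem_erase haJ')
        (Finset.mem_of_mem_erase ha1)⟩
    · intro hn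
      have hnI : n ∈ I := Finset.mem_of_mem_erase hn
      have hnJ : n ∈ J := by
        have := h (n + 1) hmI hmJ (by simpa using hnI)
        simpa using this
      exact Finset.mem_erase.mpr ⟨by omega, hnJ⟩
  · rintro ⟨h1, h2⟩ a haI haJ ha1
    by_cases hane : a = n + 1
    · subst hane
      simp only [Nat.add_sub_cancel] at ha1 ⊢
      exact Finset.mem_of_mem_erase (h2 (Finset.mem_erase.mpr ⟨by omega, ha1⟩))
    · have han : a ≤ n + 1 := (Finset.mem_Icc.mp (hI haI)).2
      exact Finset.mem_of_mem_erase (h1 a (Finset.mem_erase.mpr ⟨hane, haI⟩)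
        (Finset.mem_erase.mpr ⟨hane, haJ⟩) (Finset.mem_erase.mpr ⟨by omega, ha1⟩))

lemma subset_Icc_of_not_mem {n : ℕ} {I : Finset ℕ} (hI : I ⊆ Finset.Icc 1 (n + 1))
    (h : n + 1 ∉ I) : I ⊆ Finset.Icc 1 n := by
  intro x hx
  have h1 := Finset.mem_Icc.mp (hI hx)
  have h2 : x ≠ n + 1 := fun he => h (he ▸ hx)
  simp only [Finset.mem_Icc]
  omega

lemma erase_subset_Icc {n : ℕ} {I : Finset ℕ} (hI : I ⊆ Finset.Icc 1 (n + 1)) :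
    I.erase (n + 1) ⊆ Finset.Icc 1 n := by
  intro x hx
  have h1 := Finset.mem_Icc.mp (hI (Finset.mem_of_mem_erase hx))
  have h2 := (Finset.mem_erase.mp hx).1
  simp only [Finset.mem_Icc]; omega

lemma idx_inl {n : ℕ} {I : Finset ℕ} (hI' : I ⊆ Finset.Icc 1 n) (hI : I ⊆ Finset.Icc 1 (n + 1)) :
    idx (n + 1) I hI = blockEquiv n (Sum.inl (idx n I hI')) := by
  apply Fin.ext
  simp [idx, blockEquiv]

lemma idx_inr {n : ℕ} {I : Finset ℕ} (hm : n + 1 ∈ I) (hI : I ⊆ Finset.Icc 1 (n + 1))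
    (hI' : I.erase (n + 1) ⊆ Finset.Icc 1 n) :
    idx (n + 1) I hI = blockEquiv n (Sum.inr (idx n (I.erase (n + 1)) hI')) := by
  apply Fin.ext
  simp only [idx, blockEquiv, Equiv.trans_apply, finSumFinEquiv_apply_right, finCongr_apply,
    Fin.coe_cast, Fin.coe_natAdd]
  have h := Finset.add_sum_erase I (fun i => 2 ^ (i - 1)) hm
  simp only [Nat.add_sub_cancel] at h
  simp only [binVal]
  omega

lemma A_succ (n : ℕ) (x y : Fin (2 ^ n) ⊕ Fin (2 ^ n)) :
    A (n + 1) (blockEquiv n x) (blockEquiv n y) =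
      Matrix.fromBlocks (A n) (A n) (A n) (-(B n)) x y := by
  simp [A, B, ABpair]

lemma B_succ (n : ℕ) (x y : Fin (2 ^ n) ⊕ Fin (2 ^ n)) :
    B (n + 1) (blockEquiv n x) (blockEquiv n y) =
      Matrix.fromBlocks (A n) (A n) 0 (-(B n)) x y := by
  simp [A, B, ABpair]

lemma mainAB : ∀ n : ℕ, ∀ (I J : Finset ℕ) (hI : I ⊆ Finset.Icc 1 n) (hJ : J ⊆ Finset.Icc 1 n),
    A n (idx n I hI) (idx n J hJ) = (if Gg I J then (-1) ^ (I ∩ J).card else 0) ∧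
    B n (idx n I hI) (idx n J hJ) =
      (if Gg I J ∧ (n ∈ I → n ∈ J) then (-1) ^ (I ∩ J).card else 0) := by
  intro n
  induction n with
  | zero =>
    intro I J hI hJ
    have hI0 : I = ∅ := Finset.subset_empty.mp (by simpa using hI)
    have hJ0 : J = ∅ := Finset.subset_empty.mp (by simpa using hJ)
    subst hI0; subst hJ0
    have hgg : Gg (∅ : Finset ℕ) ∅ := by
      intro R hR
      exact absurd (hR.2.2.1 hR.1.choose_spec) (by simp)
    simp [A, B, ABpair, hgg]
  | succ n ih =>
    intro I J hI hJ
    by_cases hmI : n + 1 ∈ I <;> by_cases hmJ : n + 1 ∈ J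
    · -- n+1 ∈ I, n+1 ∈ J
      have hI' := erase_subset_Icc hI
      have hJ' := erase_subset_Icc hJ
      rw [idx_inr hmI hI hI', idx_inr hmJ hJ hJ']
      obtain ⟨-, ihB⟩ := ih _ _ hI' hJ'
      have hGg := gg_both hI hJ hmI hmJ
      have hmem : n + 1 ∈ I ∩ J := Finset.mem_inter.mpr ⟨hmI, hmJ⟩
      have hintr : I.erase (n + 1) ∩ J.erase (n + 1) = (I ∩ J).erase (n + 1) := by
        ext x
        simp only [Finset.mem_inter, Finset.mem_erase]
        tauto
      have hcard : (I ∩ J).card = (I.erase (n + 1) ∩ J.erase (n + 1)).card + 1 := by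
        rw [hintr, Finset.card_erase_of_mem hmem]
        have : 0 < (I ∩ J).card := Finset.card_pos.mpr ⟨_, hmem⟩
        omega
      constructor
      · rw [A_succ, Matrix.fromBlocks_apply₂₂, Matrix.neg_apply, ihB, hcard]
        by_cases hc : Gg I J
        · rw [if_pos hc, if_pos (hGg.mp hc), pow_succ]; ring
        · rw [if_neg hc, if_neg (fun hc' => hc (hGg.mpr hc')), neg_zero]
      · rw [B_succ, Matrix.fromBlocks_apply₂₂, Matrix.neg_apply, ihB, hcard]
        by_cases hc : Gg I J
        · rw [if_pos (hGg.mp hc), if_pos ⟨hc, fun _ => hmJ⟩, pow_succ]; ring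
        · rw [if_neg (fun hc' => hc (hGg.mpr hc')), if_neg (fun h => hc h.1), neg_zero]
    · -- n+1 ∈ I, n+1 ∉ J
      have hI' := erase_subset_Icc hI
      have hJ' := subset_Icc_of_not_mem hJ hmJ
      rw [idx_inr hmI hI hI', idx_inl hJ' hJ]
      obtain ⟨ihA, -⟩ := ih _ J hI' hJ'
      have hGg := gg_erase_left hI hmJ
      have hintr : I.erase (n + 1) ∩ J = I ∩ J := by
        ext x
        simp only [Finset.mem_inter, Finset.mem_erase]
        constructor
        · rintro ⟨⟨-, h1⟩, h2⟩; exact ⟨h1, h2⟩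
        · rintro ⟨h1, h2⟩; exact ⟨⟨fun he => hmJ (he ▸ h2), h1⟩, h2⟩
      constructor
      · rw [A_succ, Matrix.fromBlocks_apply₂₁, ihA, hintr]
        simp only [hGg]
      · rw [B_succ, Matrix.fromBlocks_apply₂₁]
        simp [hmI, hmJ]
    · -- n+1 ∉ I, n+1 ∈ J
      have hI' := subset_Icc_of_not_mem hI hmI
      have hJ' := erase_subset_Icc hJ
      rw [idx_inl hI' hI, idx_inr hmJ hJ hJ']
      obtain ⟨ihA, -⟩ := ih I _ hI' hJ'
      have hGg := gg_erase_right (n := n) (J := J) hI'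
      have hintr : I ∩ J.erase (n + 1) = I ∩ J := by
        ext x
        simp only [Finset.mem_inter, Finset.mem_erase]
        constructor
        · rintro ⟨h1, -, h2⟩; exact ⟨h1, h2⟩
        · rintro ⟨h1, h2⟩; exact ⟨h1, fun he => hmI (he ▸ h1), h2⟩
      constructor
      · rw [A_succ, Matrix.fromBlocks_apply₁₂, ihA, hintr]
        simp only [hGg]
      · rw [B_succ, Matrix.fromBlocks_apply₁₂, ihA, hintr]
        simp only [hGg, hmI]
        simp [hmI]
    · -- n+1 ∉ I, n+1 ∉ J
      have hI' := subset_Icc_of_not_mem hI hmI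
      have hJ' := subset_Icc_of_not_mem hJ hmJ
      rw [idx_inl hI' hI, idx_inl hJ' hJ]
      obtain ⟨ihA, -⟩ := ih I J hI' hJ'
      constructor
      · rw [A_succ, Matrix.fromBlocks_apply₁₁, ihA]
      · rw [B_succ, Matrix.fromBlocks_apply₁₁, ihA]
        simp [hmI]

end AuxProof

theorem stmt4 (n : ℕ) (I J : Finset ℕ) (hI : I ⊆ Finset.Icc 1 n) (hJ : J ⊆ Finset.Icc 1 n) :
    A n (idx n I hI) (idx n J hJ) = if Gg I J then (-1) ^ (I ∩ J).card else 0 :=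
  (mainAB n I J hI hJ).1

end AR
end

section
/- For every n ≥ 0, every subset I ⊆ [n], and every E ⊆ I such that E contains the minimal element of some run of I, the entry A'_n(I, ([n] \ I) ∪ E) of the matrix A'_n = U_n A_n V_n equals 0. -/
open Finset Polynomial
open scoped Classical

namespace AR

/-! ### Auxiliary lemmas -/

lemma testBit_two_pow_add' {a x : ℕ} (h : x.testBit a = false) (t : ℕ) :
    (2^a + x).testBit t = (decide (t = a) || x.testBit t) := by
  rcases lt_trichotomy t a with ht | rfl | ht
  · rw [Nat.testBit_two_pow_add_gt ht]
    simp [Nat.ne_of_lt ht]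
  · rw [Nat.testBit_two_pow_add_eq, h]; simp
  · set q := x / 2^(a+1) with hq
    set r := x % 2^(a+1) with hrdef
    have hx : 2^(a+1) * q + r = x := Nat.div_add_mod x (2^(a+1))
    have hr : r < 2^(a+1) := Nat.mod_lt _ (by positivity)
    have hra : r.testBit a = false := by
      rw [hrdef, Nat.testBit_mod_two_pow, h]; simp
    have hr' : r < 2^a := by
      have := Nat.lt_pow_two_of_testBit (n := a) (x := r) ?_
      · exact this
      · intro i hi
        rcases eq_or_lt_of_le hi with rfl | hi'
        · exact hra
        · exact Nat.testBit_lt_two_pow (lt_of_lt_of_le hr (Nat.pow_le_pow_right (by norm_num) hi'))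
    have h2 : 2^a + x = 2^(a+1) * q + (2^a + r) := by omega
    have h3 : 2^a + r < 2^(a+1) := by
      have : 2^(a+1) = 2^a + 2^a := by ring
      omega
    rw [h2, Nat.testBit_two_pow_mul_add q h3 t, ← hx, Nat.testBit_two_pow_mul_add q hr t]
    have : ¬ t < a + 1 := by omega
    simp [this, Nat.ne_of_gt ht]

lemma testBit_binVal (I : Finset ℕ) :
    (∀ i ∈ I, 1 ≤ i) → ∀ t, (binVal I).testBit t = decide (t + 1 ∈ I) := by
  induction I using Finset.induction_on with
  | empty => intro _ t; simp [binVal]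
  | @insert a I ha ih =>
      intro hI t
      have ha1 : 1 ≤ a := hI a (Finset.mem_insert_self _ _)
      have hI' : ∀ i ∈ I, 1 ≤ i := fun i hi => hI i (Finset.mem_insert_of_mem hi)
      have hbit : (binVal I).testBit (a-1) = false := by
        rw [ih hI' (a-1)]
        have : a - 1 + 1 = a := by omega
        rw [this]
        simp [ha]
      have hsum : binVal (insert a I) = 2^(a-1) + binVal I := by
        rw [binVal, Finset.sum_insert ha]; rfl
      rw [hsum, testBit_two_pow_add' hbit, ih hI' t]
      by_cases h : t + 1 = a
      · have h2 : t = a - 1 := by omega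
        simp [h2, h]
        left; omega
      · have : t ≠ a - 1 := by omega
        simp [this, h]

lemma decode_idx (n : ℕ) (I : Finset ℕ) (h : I ⊆ Finset.Icc 1 n) : decode n (idx n I h) = I := by
  ext k
  have hIle : ∀ i ∈ I, 1 ≤ i := fun i hi => (Finset.mem_Icc.mp (h hi)).1
  simp only [decode, Finset.mem_filter, idx, testBit_binVal I hIle]
  constructor
  · rintro ⟨hk, hb⟩
    have : k - 1 + 1 = k := by
      have := (Finset.mem_Icc.mp hk).1; omega
    rw [this] at hb; exact of_decide_eq_true hb
  · intro hk
    have h1 : 1 ≤ k := hIle k hk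
    have : k - 1 + 1 = k := by omega
    exact ⟨h hk, by rw [this]; exact decide_eq_true hk⟩

lemma mem_decode {n : ℕ} {i : Fin (2^n)} {k : ℕ} :
    k ∈ decode n i ↔ (1 ≤ k ∧ k ≤ n ∧ i.val.testBit (k-1) = true) := by
  simp [decode, Finset.mem_Icc, and_assoc]

lemma blockEquiv_inl (n : ℕ) (i : Fin (2^n)) : ((blockEquiv n) (Sum.inl i)).val = i.val := by
  simp [blockEquiv]

lemma blockEquiv_inr (n : ℕ) (i : Fin (2^n)) : ((blockEquiv n) (Sum.inr i)).val = 2^n + i.val := by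
  simp [blockEquiv]; omega

def half (n : ℕ) (x : Fin (2^(n+1))) : Fin (2^n) :=
  ⟨x.val % 2^n, Nat.mod_lt _ (by positivity)⟩

lemma symm_lo {n : ℕ} (x : Fin (2^(n+1))) (h : x.val < 2^n) :
    (blockEquiv n).symm x = Sum.inl (half n x) := by
  rw [Equiv.symm_apply_eq]
  apply Fin.ext
  rw [blockEquiv_inl]
  simp [half, Nat.mod_eq_of_lt h]

lemma symm_hi {n : ℕ} (x : Fin (2^(n+1))) (h : 2^n ≤ x.val) :
    (blockEquiv n).symm x = Sum.inr (half n x) := by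
  rw [Equiv.symm_apply_eq]
  apply Fin.ext
  rw [blockEquiv_inr]
  have hx : x.val < 2^(n+1) := x.isLt
  have h2 : (2:ℕ)^(n+1) = 2^n + 2^n := by ring
  simp only [half]
  have : x.val % 2^n = x.val - 2^n := by
    rw [Nat.mod_eq_sub_mod h, Nat.mod_eq_of_lt (by omega)]
  omega

lemma A_succ_apply (n : ℕ) (x y : Fin (2^(n+1))) :
    A (n+1) x y =
      if 2^n ≤ x.val then
        (if 2^n ≤ y.val then -(B n (half n x) (half n y)) else A n (half n x) (half n y))
      else A n (half n x) (half n y) := by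
  have hA : A (n+1) = (Matrix.reindex (blockEquiv n) (blockEquiv n))
      (Matrix.fromBlocks (A n) (A n) (A n) (-(B n))) := rfl
  rw [hA, Matrix.reindex_apply, Matrix.submatrix_apply]
  by_cases hx : 2^n ≤ x.val
  · rw [symm_hi x hx]
    by_cases hy : 2^n ≤ y.val
    · rw [symm_hi y hy]; simp [hx, hy]
    · rw [symm_lo y (by omega)]; simp [hx, hy]
  · rw [symm_lo x (by omega)]
    by_cases hy : 2^n ≤ y.val
    · rw [symm_hi y hy]; simp [hx, hy]
    · rw [symm_lo y (by omega)]; simp [hx, hy]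

lemma B_succ_apply (n : ℕ) (x y : Fin (2^(n+1))) :
    B (n+1) x y =
      if 2^n ≤ x.val then
        (if 2^n ≤ y.val then -(B n (half n x) (half n y)) else 0)
      else A n (half n x) (half n y) := by
  have hB : B (n+1) = (Matrix.reindex (blockEquiv n) (blockEquiv n))
      (Matrix.fromBlocks (A n) (A n) 0 (-(B n))) := rfl
  rw [hB, Matrix.reindex_apply, Matrix.submatrix_apply]
  by_cases hx : 2^n ≤ x.val
  · rw [symm_hi x hx]
    by_cases hy : 2^n ≤ y.val
    · rw [symm_hi y hy]; simp [hx, hy]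
    · rw [symm_lo y (by omega)]; simp [hx, hy]
  · rw [symm_lo x (by omega)]
    by_cases hy : 2^n ≤ y.val
    · rw [symm_hi y hy]; simp [hx, hy]
    · rw [symm_lo y (by omega)]; simp [hx, hy]

lemma testBit_high {x n : ℕ} (hx : x < 2^(n+1)) : x.testBit n = decide (2^n ≤ x) := by
  by_cases h : 2^n ≤ x
  · have hxx : x = 2^n * 1 + (x - 2^n) := by omega
    have hb : x - 2^n < 2^n := by
      have : (2:ℕ)^(n+1) = 2^n + 2^n := by ring
      omega
    rw [hxx, Nat.testBit_two_pow_mul_add 1 hb n]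
    simp [h]
  · rw [Nat.testBit_lt_two_pow (by omega)]
    simp [h]

lemma lt_of_high_bit {x n : ℕ} (hx : x < 2^(n+1)) (h : x.testBit n = false) : x < 2^n := by
  by_contra hc
  rw [testBit_high hx] at h
  simp at h
  omega

lemma half_testBit (n : ℕ) (x : Fin (2^(n+1))) (t : ℕ) :
    (half n x).val.testBit t = (decide (t < n) && x.val.testBit t) := by
  simp [half, Nat.testBit_mod_two_pow]

lemma AeqB (n : ℕ) (x y : Fin (2^(n+1))) (h : x.val < 2^n) : A (n+1) x y = B (n+1) x y := by
  rw [A_succ_apply, B_succ_apply]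
  have : ¬ 2^n ≤ x.val := by omega
  simp [this]

lemma key : ∀ (n : ℕ) (x x' y : Fin (2^n)) (t : ℕ),
    y.val.testBit t = true → x.val.testBit t = true → x'.val.testBit t = false →
    (∀ s, s ≠ t → x'.val.testBit s = x.val.testBit s) →
    (t = 0 ∨ x.val.testBit (t-1) = false) →
    A n x y = - A n x' y ∧ B n x y = - B n x' y := by
  intro n
  induction n with
  | zero =>
      intro x x' y t _ hx _ _ _
      have : x.val = 0 := by omega
      rw [this] at hx
      simp [Nat.zero_testBit] at hx
  | succ n ih =>
      intro x x' y t hy hx hx' hs hlow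
      have ht : t < n + 1 := by
        by_contra hc
        have : x.val < 2^t := lt_of_lt_of_le x.isLt (Nat.pow_le_pow_right (by norm_num) (by omega))
        rw [Nat.testBit_lt_two_pow this] at hx
        exact Bool.false_ne_true hx
      rcases eq_or_lt_of_le (Nat.lt_succ_iff.mp ht) with rfl | htn
      · -- t = n : top bit case
        have hxh : 2^t ≤ x.val := by
          by_contra hc
          rw [testBit_high x.isLt] at hx; simp at hx; omega
        have hx'h : ¬ 2^t ≤ x'.val := by
          by_contra hc
          rw [testBit_high x'.isLt] at hx'; simp at hx'; omega
        have hyh : 2^t ≤ y.val := by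
          by_contra hc
          rw [testBit_high y.isLt] at hy; simp at hy; omega
        have hhalf : half t x' = half t x := by
          apply Fin.ext
          apply Nat.eq_of_testBit_eq
          intro s
          rw [half_testBit, half_testBit]
          by_cases hst : s < t
          · rw [hs s (by omega)]
          · simp [hst]
        have hAB : B t (half t x) (half t y) = A t (half t x) (half t y) := by
          rcases Nat.eq_zero_or_pos t with rfl | htpos
          · show (ABpair 0).2 _ _ = (ABpair 0).1 _ _
            rfl
          · obtain ⟨m, rfl⟩ := Nat.exists_eq_succ_of_ne_zero (Nat.pos_iff_ne_zero.mp htpos)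
            rcases hlow with h0 | hlow
            · omega
            · have hb : (half (m+1) x).val.testBit m = false := by
                rw [half_testBit]
                have hmm : m + 1 - 1 = m := by omega
                rw [hmm] at hlow
                simp [hlow]
              have hlt : (half (m+1) x).val < 2^m :=
                lt_of_high_bit (half (m+1) x).isLt hb
              exact (AeqB m _ _ hlt).symm
        constructor <;>
          simp [A_succ_apply, B_succ_apply, hxh, hyh, hx'h, hhalf, hAB]
      · -- t < n
        have htopeq : x'.val.testBit n = x.val.testBit n := hs n (by omega)
        have hyt : (half n y).val.testBit t = true := by rw [half_testBit]; simp [htn, hy]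
        have hxt : (half n x).val.testBit t = true := by rw [half_testBit]; simp [htn, hx]
        have hx't : (half n x').val.testBit t = false := by rw [half_testBit]; simp [hx']
        have hss : ∀ s, s ≠ t → (half n x').val.testBit s = (half n x).val.testBit s := by
          intro s hst
          rw [half_testBit, half_testBit, hs s hst]
        have hlow' : t = 0 ∨ (half n x).val.testBit (t-1) = false := by
          rcases hlow with h0 | hl
          · exact Or.inl h0
          · right; rw [half_testBit]; simp [hl]
        have IH := ih (half n x) (half n x') (half n y) t hyt hxt hx't hss hlow'
        by_cases hxtop : 2^n ≤ x.val
        · have hx'top : 2^n ≤ x'.val := by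
            by_contra hc
            rw [testBit_high x'.isLt, testBit_high x.isLt] at htopeq
            simp [hc, hxtop] at htopeq
          by_cases hytop : 2^n ≤ y.val <;>
            constructor <;>
              simp [A_succ_apply, B_succ_apply, hxtop, hx'top, hytop, IH.1, IH.2]
        · have hx'top : ¬ 2^n ≤ x'.val := by
            by_contra hc
            rw [testBit_high x'.isLt, testBit_high x.isLt] at htopeq
            simp [hc, hxtop] at htopeq
          constructor <;>
            simp [A_succ_apply, B_succ_apply, hxtop, hx'top, IH.1]

def flipBit (n t : ℕ) (ht : t < n) (k : Fin (2^n)) : Fin (2^n) :=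
  ⟨k.val ^^^ 2^t, Nat.xor_lt_two_pow k.isLt (Nat.pow_lt_pow_right (by norm_num) ht)⟩

lemma flipBit_testBit (n t : ℕ) (ht : t < n) (k : Fin (2^n)) (s : ℕ) :
    (flipBit n t ht k).val.testBit s = xor (k.val.testBit s) (decide (t = s)) := by
  simp [flipBit, Nat.testBit_xor, Nat.testBit_two_pow]

lemma flipBit_flipBit (n t : ℕ) (ht : t < n) (k : Fin (2^n)) :
    flipBit n t ht (flipBit n t ht k) = k := by
  apply Fin.ext
  simp [flipBit, Nat.xor_assoc]

lemma flipBit_ne (n t : ℕ) (ht : t < n) (k : Fin (2^n)) : flipBit n t ht k ≠ k := by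
  intro hc
  have h2 := congrArg (fun z : Fin (2^n) => z.val.testBit t) hc
  rw [flipBit_testBit] at h2
  simp at h2

lemma cancel (n t : ℕ) (ht : t < n) (k l : Fin (2^n))
    (hl : l.val.testBit t = true)
    (hlow : t = 0 ∨ k.val.testBit (t-1) = false) :
    A n k l + A n (flipBit n t ht k) l = 0 := by
  have hflip_low : t = 0 ∨ (flipBit n t ht k).val.testBit (t-1) = false := by
    rcases hlow with h0 | hl'
    · exact Or.inl h0
    · rcases Nat.eq_zero_or_pos t with rfl | htpos
      · exact Or.inl rfl
      · right
        rw [flipBit_testBit]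
        have : t ≠ t - 1 := by omega
        simp [this, hl']
  by_cases hb : k.val.testBit t = true
  · have hx' : (flipBit n t ht k).val.testBit t = false := by
      rw [flipBit_testBit]; simp [hb]
    have hsame : ∀ s, s ≠ t → (flipBit n t ht k).val.testBit s = k.val.testBit s := by
      intro s hst
      rw [flipBit_testBit]
      simp [Ne.symm hst]
    have := (key n k (flipBit n t ht k) l t hl hb hx' hsame hlow).1
    rw [this]; ring
  · have hb' : k.val.testBit t = false := by
      cases hkb : k.val.testBit t
      · rfl
      · exact absurd hkb hb
    have hx : (flipBit n t ht k).val.testBit t = true := by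
      rw [flipBit_testBit]; simp [hb']
    have hsame : ∀ s, s ≠ t → k.val.testBit s = (flipBit n t ht k).val.testBit s := by
      intro s hst
      rw [flipBit_testBit]
      simp [Ne.symm hst]
    have := (key n (flipBit n t ht k) k l t hl hx hb' hsame hflip_low).1
    rw [this]; ring

lemma run_pred_notMem {I R : Finset ℕ} (h : IsRun I R) (hne : R.Nonempty)
    (hm2 : 2 ≤ R.min' hne) : R.min' hne - 1 ∉ I := by
  obtain ⟨hne', hInt, hsub, hmax⟩ := h
  obtain ⟨a, b, rfl⟩ := hInt
  have hab : a ≤ b := by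
    rcases hne with ⟨x, hx⟩
    rw [Finset.mem_Icc] at hx; omega
  have hmin : (Finset.Icc a b).min' hne = a := by
    apply le_antisymm
    · exact Finset.min'_le _ a (Finset.mem_Icc.mpr ⟨le_rfl, hab⟩)
    · exact Finset.le_min' _ _ _ (fun y hy => (Finset.mem_Icc.mp hy).1)
  rw [hmin] at hm2 ⊢
  intro hmem
  have hS : Finset.Icc (a-1) b = Finset.Icc a b := by
    apply hmax
    · exact ⟨a-1, b, rfl⟩
    · intro x hx
      rw [Finset.mem_Icc] at hx
      rcases eq_or_lt_of_le hx.1 with rfl | hlt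
      · exact hmem
      · exact hsub (Finset.mem_Icc.mpr ⟨by omega, hx.2⟩)
    · exact Finset.Icc_subset_Icc (by omega) le_rfl
  have h1 : a - 1 ∈ Finset.Icc (a-1) b := Finset.mem_Icc.mpr ⟨le_rfl, by omega⟩
  rw [hS, Finset.mem_Icc] at h1
  omega

theorem stmt8 (n : ℕ) (I E : Finset ℕ) (hI : I ⊆ Finset.Icc 1 n) (hE : E ⊆ I)
    (hmin : ∃ R : Finset ℕ, ∃ h : IsRun I R, R.min' h.1 ∈ E) :
    A' n (idx n I hI)
      (idx n ((Finset.Icc 1 n \ I) ∪ E)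
        (Finset.union_subset Finset.sdiff_subset (hE.trans hI))) = 0 := by
  classical
  obtain ⟨R, hR, hmE⟩ := hmin
  set m := R.min' hR.1 with hm
  have hmR : m ∈ R := Finset.min'_mem _ _
  have hmI : m ∈ I := hR.2.2.1 hmR
  have hmIcc := Finset.mem_Icc.mp (hI hmI)
  have hm1 : 1 ≤ m := hmIcc.1
  have hmn : m ≤ n := hmIcc.2
  have hmJ : m ∈ (Finset.Icc 1 n \ I) ∪ E := Finset.mem_union_right _ hmE
  have hpred : 2 ≤ m → m - 1 ∉ I := fun h2 => run_pred_notMem hR hR.1 h2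
  have hJ : (Finset.Icc 1 n \ I) ∪ E ⊆ Finset.Icc 1 n :=
    Finset.union_subset Finset.sdiff_subset (hE.trans hI)
  have ht : m - 1 < n := by omega
  show (U n * A n * V n) _ _ = 0
  rw [Matrix.mul_apply]
  apply Finset.sum_eq_zero
  intro l _
  by_cases hVl : decode n (idx n ((Finset.Icc 1 n \ I) ∪ E)
      (Finset.union_subset Finset.sdiff_subset (hE.trans hI))) ⊆ decode n l
  · have hmL : l.val.testBit (m-1) = true := by
      have hmem : m ∈ decode n l := by
        apply hVl
        rw [decode_idx]
        exact hmJ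
      rw [mem_decode] at hmem
      exact hmem.2.2
    suffices hz : (U n * A n) (idx n I hI) l = 0 by rw [hz, zero_mul]
    rw [Matrix.mul_apply]
    refine Finset.sum_involution (fun k _ => flipBit n (m-1) ht k) ?_ ?_
      (fun k hk => Finset.mem_univ _) (fun k hk => flipBit_flipBit n (m-1) ht k)
    · intro k _
      by_cases hk : decode n k ⊆ decode n (idx n I hI)
      · have hkflip : decode n (flipBit n (m-1) ht k) ⊆ decode n (idx n I hI) := by
          intro s hs
          rw [mem_decode] at hs
          obtain ⟨hs1, hs2, hs3⟩ := hs
          rw [flipBit_testBit] at hs3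
          by_cases hsm : m - 1 = s - 1
          · have : s = m := by omega
            rw [decode_idx]
            rw [this]
            exact hmI
          · apply hk
            rw [mem_decode]
            refine ⟨hs1, hs2, ?_⟩
            simp [hsm] at hs3
            exact hs3
        have hU1 : U n (idx n I hI) k = 1 := by simp [U, hk]
        have hU2 : U n (idx n I hI) (flipBit n (m-1) ht k) = 1 := by simp [U, hkflip]
        rw [hU1, hU2, one_mul, one_mul]
        apply cancel n (m-1) ht k l hmL
        rcases Nat.lt_or_ge m 2 with hm1' | hm2
        · left; omega
        · right
          by_contra hbit
          have hbit' : k.val.testBit (m-1-1) = true := by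
            cases hkb : k.val.testBit (m-1-1)
            · exact absurd hkb hbit
            · rfl
          have : m - 1 ∈ decode n k := by
            rw [mem_decode]
            exact ⟨by omega, by omega, hbit'⟩
          have := hk this
          rw [decode_idx] at this
          exact hpred hm2 this
      · have hkflip : ¬ decode n (flipBit n (m-1) ht k) ⊆ decode n (idx n I hI) := by
          intro hc
          apply hk
          intro s hs
          rw [mem_decode] at hs
          obtain ⟨hs1, hs2, hs3⟩ := hs
          by_cases hsm : s = m
          · rw [decode_idx, hsm]; exact hmI
          · apply hc
            rw [mem_decode]
            refine ⟨hs1, hs2, ?_⟩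
            rw [flipBit_testBit]
            have : m - 1 ≠ s - 1 := by omega
            simp [this, hs3]
        have hU1 : U n (idx n I hI) k = 0 := by simp [U, hk]
        have hU2 : U n (idx n I hI) (flipBit n (m-1) ht k) = 0 := by simp [U, hkflip]
        rw [hU1, hU2, zero_mul, zero_mul, add_zero]
    · intro k _ _
      exact flipBit_ne n (m-1) ht k
  · have hV0 : V n l (idx n ((Finset.Icc 1 n \ I) ∪ E)
        (Finset.union_subset Finset.sdiff_subset (hE.trans hI))) = 0 := by
      simp [V, hVl]
    rw [hV0, mul_zero]


end AR
end
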